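/- The product of two forms, each lying in the interior of its respective sums-of-squares cone, again lies in the interior of the sums-of-squares cone of the appropriate degree. -/

import Mathlib

open MvPolynomial Finsupp

/-- `f` is a sum of squares of forms of degree `d` in `n` variables. -/
def IsSOSForm (n d : ℕ) (f : MvPolynomial (Fin n) ℝ) : Prop :=
  ∃ (N : ℕ) (g : Fin N → MvPolynomial (Fin n) ℝ),
    (∀ i, (g i).IsHomogeneous d) ∧ f = ∑ i, (g i) ^ 2

/-- The cone `Σ_{2d}` of sums of squares of degree-`d` forms, as a subset of the
finite-dimensional real vector space `R[x]_{2d}` of forms of degree `2d`. -/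
def SigmaCone (n d : ℕ) : Set (homogeneousSubmodule (Fin n) ℝ (2 * d)) :=
  {f | IsSOSForm n d (f : MvPolynomial (Fin n) ℝ)}

/-- The canonical topology on the finite-dimensional real vector space of forms. -/
noncomputable instance (n d : ℕ) : TopologicalSpace (homogeneousSubmodule (Fin n) ℝ d) :=
  moduleTopology ℝ _

/-- A form is positive definite if it is positive away from the origin. -/
def PosDefForm (n : ℕ) (f : MvPolynomial (Fin n) ℝ) : Prop :=
  ∀ x : Fin n → ℝ, x ≠ 0 → 0 < eval x f

/-- For a sos form `f` of degree `2d`, the set `U_f` of forms `p` of degree `d`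
such that `f - c p ^ 2` is sos for some `c > 0`. -/
def Uset (n d : ℕ) (f : MvPolynomial (Fin n) ℝ) : Set (MvPolynomial (Fin n) ℝ) :=
  {p | p.IsHomogeneous d ∧ ∃ c : ℝ, 0 < c ∧ IsSOSForm n d (f - c • p ^ 2)}

/-!
For `q = ∑ xᵢ²`, the form `q ^ k` is an interior point of `Σ_{2k}`. Indeed `q ^ |β| - (x^β)²` is
a sum of squares for every exponent `β`, and every monomial of degree `2k` is a product
`x^β x^γ` with `|β| = |γ| = k`, so `q ^ k + t x^β x^γ` is a sum of squares for `|t| ≤ 1`; a convex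
set containing such a segment in the direction of each vector of a basis is, in finite dimension,
a neighbourhood of `q ^ k`.

If `f` and `g` are interior, then `f - ε₁ q ^ d` and `g - ε₂ q ^ e` are sums of squares for small
`ε₁, ε₂ > 0`, hence so is `f g - ε₁ ε₂ q ^ (d + e)`, and `f g` is the sum of a point of the cone and
an interior point of it.
-/

open scoped Topology Pointwise

namespace IsSOSForm

variable {n d e : ℕ} {f g : MvPolynomial (Fin n) ℝ}

lemma zero (d : ℕ) : IsSOSForm n d 0 :=
  ⟨0, Fin.elim0, fun i => i.elim0, by simp⟩

lemma sq (hf : f.IsHomogeneous d) : IsSOSForm n d (f ^ 2) :=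
  ⟨1, fun _ => f, fun _ => hf, by simp⟩

lemma add (hf : IsSOSForm n d f) (hg : IsSOSForm n d g) : IsSOSForm n d (f + g) := by
  obtain ⟨N, a, ha, rfl⟩ := hf
  obtain ⟨M, b, hb, rfl⟩ := hg
  exact ⟨N + M, Fin.addCases a b, Fin.addCases (by simpa using ha) (by simpa using hb),
    by simp [Fin.sum_univ_add]⟩

lemma sum {ι : Type*} {s : Finset ι} {f : ι → MvPolynomial (Fin n) ℝ}
    (h : ∀ i ∈ s, IsSOSForm n d (f i)) : IsSOSForm n d (∑ i ∈ s, f i) :=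
  Finset.sum_induction f _ (fun _ _ => add) (zero d) h

lemma smul {c : ℝ} (hc : 0 ≤ c) (hf : IsSOSForm n d f) : IsSOSForm n d (c • f) := by
  obtain ⟨N, a, ha, rfl⟩ := hf
  refine ⟨N, fun i => C √c * a i, fun i => (ha i).C_mul _, ?_⟩
  simp [Finset.smul_sum, mul_pow, ← map_pow, Real.sq_sqrt hc, smul_eq_C_mul]

lemma mul (hf : IsSOSForm n d f) (hg : IsSOSForm n e g) : IsSOSForm n (d + e) (f * g) := by
  obtain ⟨N, a, ha, rfl⟩ := hf
  obtain ⟨M, b, hb, rfl⟩ := hg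
  refine ⟨N * M, fun i => a (finProdFinEquiv.symm i).1 * b (finProdFinEquiv.symm i).2,
    fun i => (ha _).mul (hb _), ?_⟩
  rw [Finset.sum_mul_sum, ← Fintype.sum_prod_type', ← finProdFinEquiv.symm.sum_comp]
  simp [mul_pow]

lemma mul_sub_mul {f' g' : MvPolynomial (Fin n) ℝ} (hf : IsSOSForm n d (f - f'))
    (hf' : IsSOSForm n d f') (hg : IsSOSForm n e (g - g')) (hg' : IsSOSForm n e g') :
    IsSOSForm n (d + e) (f * g - f' * g') := by
  have key : f * g - f' * g' = (f - f') * (g - g') + (f - f') * g' + f' * (g - g') := by ring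
  rw [key]
  exact ((hf.mul hg).add (hf.mul hg')).add (hf'.mul hg)

end IsSOSForm

section SumSq

variable {n : ℕ}

noncomputable def sumSq (n : ℕ) : MvPolynomial (Fin n) ℝ := ∑ i, X i ^ 2

lemma isHomogeneous_sumSq_pow (k : ℕ) : (sumSq n ^ k).IsHomogeneous (2 * k) := by
  have h : (sumSq n).IsHomogeneous 2 :=
    IsHomogeneous.sum _ _ _ fun i _ => isHomogeneous_X_pow i 2
  simpa [mul_comm] using h.pow k

lemma isSOSForm_sumSq_pow (k : ℕ) : IsSOSForm n k (sumSq n ^ k) := by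
  induction k with
  | zero => simpa using IsSOSForm.sq (isHomogeneous_one (Fin n) ℝ)
  | succ k ih => exact ih.mul (IsSOSForm.sum fun i _ => .sq (isHomogeneous_X ℝ i))

lemma isSOSForm_sumSq_sub_X_sq (i : Fin n) : IsSOSForm n 1 (sumSq n - X i ^ 2) := by
  classical
  rw [sumSq, ← Finset.add_sum_erase _ _ (Finset.mem_univ i), add_sub_cancel_left]
  exact IsSOSForm.sum fun j _ => .sq (isHomogeneous_X ℝ j)

lemma isSOSForm_sumSq_pow_sub_X_pow_sq (i : Fin n) (b : ℕ) :
    IsSOSForm n b (sumSq n ^ b - (X i ^ b) ^ 2) := by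
  induction b with
  | zero => simpa using IsSOSForm.zero 0
  | succ b ih =>
    have h := ih.mul_sub_mul (.sq (isHomogeneous_X_pow i b)) (isSOSForm_sumSq_sub_X_sq i)
      (.sq (isHomogeneous_X ℝ i))
    convert h using 2 <;> ring

lemma isSOSForm_sumSq_pow_sub_monomial_sq (β : Fin n →₀ ℕ) :
    IsSOSForm n β.degree (sumSq n ^ β.degree - monomial β 1 ^ 2) := by
  induction β using Finsupp.induction_linear with
  | zero => simpa using IsSOSForm.zero 0
  | add β γ hβ hγ =>
    rw [map_add, pow_add, ← mul_one (1 : ℝ), ← monomial_mul, mul_pow]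
    exact hβ.mul_sub_mul (.sq (isHomogeneous_monomial _ rfl)) hγ
      (.sq (isHomogeneous_monomial _ rfl))
  | single i b => simpa [← X_pow_eq_monomial] using isSOSForm_sumSq_pow_sub_X_pow_sq i b

lemma isSOSForm_sumSq_pow_add_smul_monomial {k : ℕ} {α : Fin n →₀ ℕ} (hα : α.degree = 2 * k)
    {t : ℝ} (ht : |t| ≤ 1) : IsSOSForm n k (sumSq n ^ k + t • monomial α 1) := by
  obtain ⟨β, hβα, hβ⟩ := Finsupp.exists_le_degree_eq α k (by omega)
  obtain ⟨γ, rfl⟩ := le_iff_exists_add.mp hβα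
  have hγ : γ.degree = k := by rw [map_add] at hα; omega
  rw [show monomial (β + γ) (1 : ℝ) = monomial β 1 * monomial γ 1 by rw [monomial_mul, mul_one]]
  set u : MvPolynomial (Fin n) ℝ := monomial β 1
  set v : MvPolynomial (Fin n) ℝ := monomial γ 1
  have hu : u.IsHomogeneous k := isHomogeneous_monomial _ hβ
  have hv : v.IsHomogeneous k := isHomogeneous_monomial _ hγ
  have key : (2 : ℝ) • (sumSq n ^ k + t • (u * v)) =
      (sumSq n ^ k - u ^ 2) + (sumSq n ^ k - v ^ 2) + (u + C t * v) ^ 2 + (1 - t ^ 2) • v ^ 2 := by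
    simp only [smul_eq_C_mul, map_sub, map_pow, C_1, map_ofNat]
    ring
  have ht' : 0 ≤ 1 - t ^ 2 := by nlinarith [abs_le.mp ht]
  have hq := isSOSForm_sumSq_pow_sub_monomial_sq (n := n)
  have h2 : IsSOSForm n k ((2 : ℝ) • (sumSq n ^ k + t • (u * v))) := by
    rw [key]
    exact (((hβ ▸ hq β).add (hγ ▸ hq γ)).add (.sq (hu.add (hv.C_mul t)))).add
      ((IsSOSForm.sq hv).smul ht')
  simpa [smul_smul] using h2.smul (c := 1 / 2) (by norm_num)

end SumSq

section Interior

variable {M : Type*} [AddCommGroup M] [Module ℝ M] [TopologicalSpace M]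

lemma exists_pos_sub_smul_mem_of_mem_interior [ContinuousSub M] [ContinuousSMul ℝ M]
    {s : Set M} {x : M} (hx : x ∈ interior s) (y : M) : ∃ ε : ℝ, 0 < ε ∧ x - ε • y ∈ s := by
  have hcont : Continuous fun t : ℝ => x - t • y := by fun_prop
  have hev : ∀ᶠ t in 𝓝 (0 : ℝ), x - t • y ∈ s :=
    hcont.continuousAt.preimage_mem_nhds (by simpa using mem_interior_iff_mem_nhds.mp hx)
  obtain ⟨ε, hεs, hε⟩ :=
    ((hev.filter_mono (nhdsWithin_le_nhds (s := Set.Ioi 0))).and self_mem_nhdsWithin).exists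
  exact ⟨ε, hε, hεs⟩

lemma Convex.mem_interior_of_forall_add_smul_basis_mem [IsModuleTopology ℝ M] {ι : Type*}
    [Finite ι] {C : Set M} (hC : Convex ℝ C) (b : Module.Basis ι ℝ M) {x : M} (hx : x ∈ C)
    {δ : ℝ} (hδ : 0 < δ) (h : ∀ i, ∀ t : ℝ, |t| ≤ δ → x + t • b i ∈ C) : x ∈ interior C := by
  classical
  cases nonempty_fintype ι
  set N : ℝ := Fintype.card ι + 1 with hN_def
  have hN : 0 < N := by positivity
  set U : Set M := ⋂ i, {y | |b.coord i y - b.coord i x| < δ / N}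
  have hU : IsOpen U := isOpen_iInter_of_finite fun i => isOpen_lt
    (continuous_abs.comp ((IsModuleTopology.continuous_of_linearMap (b.coord i)).sub
      continuous_const)) continuous_const
  refine mem_interior.mpr ⟨U, fun y hy => ?_, hU, by simp [U, hδ, hN]⟩
  set a : ι → ℝ := fun i => b.coord i y - b.coord i x
  have ha : ∀ i, |N * a i| ≤ δ := fun i => by
    have := Set.mem_iInter.mp hy i
    rw [abs_mul, abs_of_pos hN]
    exact (lt_div_iff₀' hN).mp this |>.le
  -- `y` is the barycentre of `x` and the points `x + (N * a i) • b i`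
  set z : Option ι → M := fun o => o.elim x fun i => x + (N * a i) • b i
  have hy_eq : y = ∑ o, N⁻¹ • z o := by
    have hyx : y - x = ∑ i, a i • b i := by
      simp [a, sub_smul, Finset.sum_sub_distrib]
    simp only [Fintype.sum_option, z, Option.elim, smul_add, Finset.sum_add_distrib,
      Finset.sum_const, Finset.card_univ, smul_smul, inv_mul_cancel_left₀ hN.ne', ← hyx,
      ← Nat.cast_smul_eq_nsmul ℝ]
    have hw : N⁻¹ + Fintype.card ι * N⁻¹ = 1 := by
      rw [hN_def]
      field_simp
      ring
    rw [← add_assoc, ← add_smul, hw, one_smul, add_sub_cancel]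
  rw [hy_eq]
  refine hC.sum_mem (fun _ _ => by positivity) ?_ fun o _ => ?_
  · simp [Fintype.card_option, N, hN.ne']
  · cases o with
    | none => exact hx
    | some i => exact h i _ (ha i)

end Interior

namespace MvPolynomial

variable {σ R : Type*} [CommSemiring R]

lemma coe_basisRestrictSupport (s : Set (σ →₀ ℕ)) (α : s) :
    (basisRestrictSupport R s α : MvPolynomial σ R) = monomial α 1 := by
  change ((AddMonoidAlgebra.supportedEquivFinsupp (R := R) (S := R) s).symm
    (Finsupp.single α 1) : MvPolynomial σ R) = _
  simp [AddMonoidAlgebra.supportedEquivFinsupp]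
  rfl

variable (σ R) in
noncomputable def homogeneousBasis (m : ℕ) :
    Module.Basis {α : σ →₀ ℕ | α.degree = m} R (homogeneousSubmodule σ R m) :=
  (basisRestrictSupport R _).map <| LinearEquiv.ofEq _ _
    (show restrictSupport R _ = _ from (homogeneousSubmodule_eq_finsupp_supported σ R m).symm)

@[simp]
lemma coe_homogeneousBasis {m : ℕ} (α : {α : σ →₀ ℕ | α.degree = m}) :
    (homogeneousBasis σ R m α : MvPolynomial σ R) = monomial α 1 := by
  rw [homogeneousBasis, Module.Basis.map_apply, LinearEquiv.coe_ofEq_apply,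
    coe_basisRestrictSupport]

end MvPolynomial

section SigmaCone

variable {n d : ℕ}

instance (n m : ℕ) : IsModuleTopology ℝ (homogeneousSubmodule (Fin n) ℝ m) := ⟨rfl⟩

instance (n m : ℕ) : IsTopologicalAddGroup (homogeneousSubmodule (Fin n) ℝ m) :=
  IsModuleTopology.topologicalAddGroup ℝ _

lemma mem_sigmaCone {f : homogeneousSubmodule (Fin n) ℝ (2 * d)} :
    f ∈ SigmaCone n d ↔ IsSOSForm n d f :=
  Iff.rfl

lemma convex_sigmaCone : Convex ℝ (SigmaCone n d) :=
  fun _ hf _ hg _ _ ha hb _ => (hf.smul ha).add (hg.smul hb)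

lemma add_mem_interior_sigmaCone {f g : homogeneousSubmodule (Fin n) ℝ (2 * d)}
    (hf : f ∈ SigmaCone n d) (hg : g ∈ interior (SigmaCone n d)) :
    f + g ∈ interior (SigmaCone n d) := by
  refine interior_mono ?_ (subset_interior_add_right (Set.add_mem_add hf hg))
  rintro _ ⟨f, hf, g, hg, rfl⟩
  exact IsSOSForm.add hf hg

lemma smul_mem_interior_sigmaCone {f : homogeneousSubmodule (Fin n) ℝ (2 * d)} {c : ℝ}
    (hc : 0 < c) (hf : f ∈ interior (SigmaCone n d)) : c • f ∈ interior (SigmaCone n d) := by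
  have hcf : c • f ∈ interior (c • SigmaCone n d) := by
    rw [interior_smul₀ hc.ne']
    exact Set.smul_mem_smul_set hf
  refine interior_mono ?_ hcf
  rintro _ ⟨f, hf, rfl⟩
  exact IsSOSForm.smul hc.le hf

noncomputable def sumSqPow (n k : ℕ) : homogeneousSubmodule (Fin n) ℝ (2 * k) :=
  ⟨sumSq n ^ k, isHomogeneous_sumSq_pow k⟩

lemma sumSqPow_mem_interior_sigmaCone (k : ℕ) : sumSqPow n k ∈ interior (SigmaCone n k) := by
  have : Module.Finite ℝ (homogeneousSubmodule (Fin n) ℝ (2 * k)) :=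
    Module.Finite.iff_fg.mpr (homogeneousSubmodule_fg _ _ _)
  have := Module.Finite.finite_basis (homogeneousBasis (Fin n) ℝ (2 * k))
  refine convex_sigmaCone.mem_interior_of_forall_add_smul_basis_mem
    (homogeneousBasis (Fin n) ℝ (2 * k)) (isSOSForm_sumSq_pow k) one_pos fun α t ht => ?_
  rw [mem_sigmaCone, Submodule.coe_add, Submodule.coe_smul, coe_homogeneousBasis]
  exact isSOSForm_sumSq_pow_add_smul_monomial α.2 ht

end SigmaCone

theorem mul_mem_interior_sigmaCone (n d e : ℕ)
    (f : homogeneousSubmodule (Fin n) ℝ (2 * d))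
    (g : homogeneousSubmodule (Fin n) ℝ (2 * e))
    (hmem : (f : MvPolynomial (Fin n) ℝ) * g ∈ homogeneousSubmodule (Fin n) ℝ (2 * (d + e)))
    (hf : f ∈ interior (SigmaCone n d)) (hg : g ∈ interior (SigmaCone n e)) :
    (⟨(f : MvPolynomial (Fin n) ℝ) * g, hmem⟩ : homogeneousSubmodule (Fin n) ℝ (2 * (d + e)))
      ∈ interior (SigmaCone n (d + e)) := by
  obtain ⟨ε₁, hε₁, hf'⟩ := exists_pos_sub_smul_mem_of_mem_interior hf (sumSqPow n d)
  obtain ⟨ε₂, hε₂, hg'⟩ := exists_pos_sub_smul_mem_of_mem_interior hg (sumSqPow n e)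
  set fg : homogeneousSubmodule (Fin n) ℝ (2 * (d + e)) := ⟨_, hmem⟩
  have hrest : fg - (ε₁ * ε₂) • sumSqPow n (d + e) ∈ SigmaCone n (d + e) := by
    have h := IsSOSForm.mul_sub_mul hf' ((isSOSForm_sumSq_pow d).smul hε₁.le)
      hg' ((isSOSForm_sumSq_pow e).smul hε₂.le)
    rw [mem_sigmaCone]
    convert h using 2
    simp [fg, sumSqPow, pow_add, smul_smul, mul_comm]
  rw [← sub_add_cancel fg ((ε₁ * ε₂) • sumSqPow n (d + e))]
  exact add_mem_interior_sigmaCone hrest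
    (smul_mem_interior_sigmaCone (mul_pos hε₁ hε₂) (sumSqPow_mem_interior_sigmaCone _))
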